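/- Let k be an algebraically closed field and x = (x_1, …, x_l) ∈ (ℙ¹_k)^l. With respect to the diagonal SL(2,k)-action and the Segre embedding (ℙ¹)^l ↪ ℙ^{2^l − 1}, the point x is semistable if and only if no point of ℙ¹_k occurs among the components x_1, …, x_l more than l/2 times, and stable if and only if no point occurs l/2 or more times. -/

import Mathlib

/- GIT (semi)stability of configurations of `l` points on `ℙ¹` with respect to the
diagonal `SL(2,k)`-action and the Segre embedding `(ℙ¹)^l ↪ ℙ(V^{⊗l})`, `V = k²`.
A point of `(ℙ¹)^l` is given by a tuple `v` of nonzero vectors of `k²`; the lift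
`x̂ = v₁ ⊗ ⋯ ⊗ v_l ∈ V^{⊗l}` has coordinates `∏ i, v i (ε i)` indexed by `ε : Fin l → Fin 2`
in the standard tensor basis.  Every one-parameter subgroup of `SL(2,k)` (for `k`
algebraically closed) is conjugate to the standard torus `λ(t) = diag(t, t⁻¹)`, which acts
on the basis tensor indexed by `ε` with weight `wt ε = #{i : ε i = 0} − #{i : ε i = 1}`.
Via the Hilbert–Mumford criterion, `x` is semistable iff for every `g ∈ SL(2,k)` the limit
of `g λ(t) g⁻¹ · x̂` as `t → 0` (equivalently, of `λ(t)·(g⁻¹ x̂)`) fails to exist or is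
nonzero, and likewise as `t → ∞`; `x` is stable iff both limits fail to exist. -/

noncomputable section

variable {k : Type} [Field k] {l : ℕ}

/-- The weight of the standard torus `diag(t, t⁻¹)` on the tensor-basis vector of
`(k²)^{⊗l}` indexed by `ε`. -/
def wt (ε : Fin l → Fin 2) : ℤ := ∑ i, (if ε i = 0 then (1 : ℤ) else -1)

/-- The coordinate of the lift `u₁ ⊗ ⋯ ⊗ u_l` on the tensor-basis vector indexed by `ε`. -/
def tcoord (u : Fin l → (Fin 2 → k)) (ε : Fin l → Fin 2) : k := ∏ i, u i (ε i)

/-- GIT semistability of the point of `(ℙ¹)^l` with homogeneous coordinates `v`, via the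
Hilbert–Mumford criterion over all one-parameter subgroups `g · diag(t,t⁻¹) · g⁻¹`:
for `t → 0` and `t → ∞`, the limit of the translated lift does not exist or is nonzero. -/
def GITSemistable (v : Fin l → (Fin 2 → k)) : Prop :=
  ∀ g : Matrix.SpecialLinearGroup (Fin 2) k,
    (∃ ε : Fin l → Fin 2,
      tcoord (fun i => Matrix.mulVec (↑(g⁻¹)) (v i)) ε ≠ 0 ∧ wt ε ≤ 0) ∧
    (∃ ε : Fin l → Fin 2,
      tcoord (fun i => Matrix.mulVec (↑(g⁻¹)) (v i)) ε ≠ 0 ∧ 0 ≤ wt ε)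

/-- GIT stability: for `t → 0` and `t → ∞`, the limit of the translated lift does
not exist. -/
def GITStable (v : Fin l → (Fin 2 → k)) : Prop :=
  ∀ g : Matrix.SpecialLinearGroup (Fin 2) k,
    (∃ ε : Fin l → Fin 2,
      tcoord (fun i => Matrix.mulVec (↑(g⁻¹)) (v i)) ε ≠ 0 ∧ wt ε < 0) ∧
    (∃ ε : Fin l → Fin 2,
      tcoord (fun i => Matrix.mulVec (↑(g⁻¹)) (v i)) ε ≠ 0 ∧ 0 < wt ε)

/-! ### Auxiliary lemmas -/

lemma ncard_setOf_filter (p : Fin l → Prop) [DecidablePred p] :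
    {i | p i}.ncard = (Finset.univ.filter p).card := by
  rw [Set.ncard_eq_toFinset_card', Set.toFinset_setOf]

lemma ncard_compl (p : Fin l → Prop) :
    {i | p i}.ncard + {i | ¬ p i}.ncard = l := by
  classical
  rw [ncard_setOf_filter, ncard_setOf_filter,
    Finset.card_filter_add_card_filter_not, Finset.card_univ, Fintype.card_fin]

lemma wt_eq (ε : Fin l → Fin 2) :
    wt ε = 2 * ({i | ε i = 0}.ncard : ℤ) - l := by
  classical
  rw [ncard_setOf_filter]
  unfold wt
  rw [← Finset.sum_filter_add_sum_filter_not Finset.univ (fun i => ε i = 0)]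
  have h1 : ∑ i ∈ Finset.univ.filter (fun i => ε i = 0), (if ε i = 0 then (1:ℤ) else -1)
      = (Finset.univ.filter (fun i => ε i = 0)).card := by
    rw [Finset.sum_congr rfl (fun i hi => if_pos (Finset.mem_filter.mp hi).2)]
    simp
  have h2 : ∑ i ∈ Finset.univ.filter (fun i => ¬ ε i = 0), (if ε i = 0 then (1:ℤ) else -1)
      = -(Finset.univ.filter (fun i => ¬ ε i = 0)).card := by
    rw [Finset.sum_congr rfl (fun i hi => if_neg (Finset.mem_filter.mp hi).2)]
    simp
  have h3 := Finset.card_filter_add_card_filter_not (s := Finset.univ)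
    (p := fun i => ε i = 0)
  rw [h1, h2]
  simp only [Finset.card_univ, Fintype.card_fin] at h3
  omega

lemma wt_lower (u : Fin l → Fin 2 → k) (ε : Fin l → Fin 2) (hε : tcoord u ε ≠ 0) :
    2 * ({i | u i 1 = 0}.ncard : ℤ) - l ≤ wt ε := by
  have hsub : {i | u i 1 = 0} ⊆ {i : Fin l | ε i = 0} := by
    intro i hi
    have h := Finset.prod_ne_zero_iff.mp hε i (Finset.mem_univ i)
    have h2 : ∀ a : Fin 2, a ≠ 1 → a = 0 := by decide
    exact h2 _ (fun he => h (he ▸ hi))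
  have hle := Set.ncard_le_ncard hsub (Set.toFinite _)
  rw [wt_eq]
  omega

lemma wt_upper (u : Fin l → Fin 2 → k) (ε : Fin l → Fin 2) (hε : tcoord u ε ≠ 0) :
    wt ε ≤ (l : ℤ) - 2 * ({i | u i 0 = 0}.ncard : ℤ) := by
  have hsub : {i | u i 0 = 0} ⊆ {i : Fin l | ¬ ε i = 0} := by
    intro i hi
    have h := Finset.prod_ne_zero_iff.mp hε i (Finset.mem_univ i)
    exact fun he => h (he ▸ hi)
  have hle := Set.ncard_le_ncard hsub (Set.toFinite _)
  have hc := ncard_compl (fun i => ε i = 0)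
  rw [wt_eq]
  omega

lemma exists_min (u : Fin l → Fin 2 → k) (hu : ∀ i, u i ≠ 0) :
    ∃ ε, tcoord u ε ≠ 0 ∧ wt ε = 2 * ({i | u i 1 = 0}.ncard : ℤ) - l := by
  classical
  refine ⟨fun i => if u i 1 = 0 then 0 else 1, ?_, ?_⟩
  · rw [tcoord, Finset.prod_ne_zero_iff]
    intro i _
    by_cases h : u i 1 = 0
    · simp only [h, if_pos]
      intro h0
      exact hu i (funext fun a => by fin_cases a <;> simpa)
    · simpa [h] using h
  · rw [wt_eq]
    have hset : {i | (if u i 1 = 0 then (0 : Fin 2) else 1) = 0} = {i : Fin l | u i 1 = 0} := by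
      ext i
      by_cases h : u i 1 = 0 <;> simp [h]
    rw [hset]

lemma exists_max (u : Fin l → Fin 2 → k) (hu : ∀ i, u i ≠ 0) :
    ∃ ε, tcoord u ε ≠ 0 ∧ wt ε = (l : ℤ) - 2 * ({i | u i 0 = 0}.ncard : ℤ) := by
  classical
  refine ⟨fun i => if u i 0 = 0 then 1 else 0, ?_, ?_⟩
  · rw [tcoord, Finset.prod_ne_zero_iff]
    intro i _
    by_cases h : u i 0 = 0
    · simp only [h, if_pos]
      intro h1
      exact hu i (funext fun a => by fin_cases a <;> simpa)
    · simpa [h] using h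
  · rw [wt_eq]
    have hset : {i | (if u i 0 = 0 then (1 : Fin 2) else 0) = 0} = {i : Fin l | ¬ u i 0 = 0} := by
      ext i
      by_cases h : u i 0 = 0 <;> simp [h]
    rw [hset]
    have hc := ncard_compl (fun i => u i 0 = 0)
    omega

lemma coe_inv_mul (g : Matrix.SpecialLinearGroup (Fin 2) k) :
    (↑(g⁻¹) : Matrix (Fin 2) (Fin 2) k) * (↑g : Matrix (Fin 2) (Fin 2) k) = 1 := by
  rw [← Matrix.SpecialLinearGroup.coe_mul, inv_mul_cancel,
    Matrix.SpecialLinearGroup.coe_one]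

lemma coe_mul_inv (g : Matrix.SpecialLinearGroup (Fin 2) k) :
    (↑g : Matrix (Fin 2) (Fin 2) k) * (↑(g⁻¹) : Matrix (Fin 2) (Fin 2) k) = 1 := by
  rw [← Matrix.SpecialLinearGroup.coe_mul, mul_inv_cancel,
    Matrix.SpecialLinearGroup.coe_one]

lemma mulVec_inv_ne (g : Matrix.SpecialLinearGroup (Fin 2) k) (x : Fin 2 → k) (hx : x ≠ 0) :
    Matrix.mulVec (↑(g⁻¹) : Matrix (Fin 2) (Fin 2) k) x ≠ 0 := by
  intro h
  apply hx
  have : Matrix.mulVec (↑g : Matrix (Fin 2) (Fin 2) k)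
      (Matrix.mulVec (↑(g⁻¹) : Matrix (Fin 2) (Fin 2) k) x) = x := by
    rw [Matrix.mulVec_mulVec, coe_mul_inv, Matrix.one_mulVec]
  rw [h, Matrix.mulVec_zero] at this
  exact this.symm

lemma prop0 (g : Matrix.SpecialLinearGroup (Fin 2) k) (x : Fin 2 → k) :
    (∃ c : k, x = c • (fun a => (↑g : Matrix (Fin 2) (Fin 2) k) a 0)) ↔
      Matrix.mulVec (↑(g⁻¹) : Matrix (Fin 2) (Fin 2) k) x 1 = 0 := by
  constructor
  · rintro ⟨c, rfl⟩
    have h10 := congrFun (congrFun (coe_inv_mul g) 1) 0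
    simp only [Matrix.mul_apply, Fin.sum_univ_two,
      Matrix.one_apply_ne (by decide : (1 : Fin 2) ≠ 0)] at h10
    simp only [Matrix.mulVec, dotProduct, Fin.sum_univ_two, Pi.smul_apply, smul_eq_mul]
    linear_combination c * h10
  · intro h
    refine ⟨Matrix.mulVec (↑(g⁻¹) : Matrix (Fin 2) (Fin 2) k) x 0, funext fun a => ?_⟩
    have hx : Matrix.mulVec (↑g : Matrix (Fin 2) (Fin 2) k)
        (Matrix.mulVec (↑(g⁻¹) : Matrix (Fin 2) (Fin 2) k) x) = x := by
      rw [Matrix.mulVec_mulVec, coe_mul_inv, Matrix.one_mulVec]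
    conv_lhs => rw [← hx]
    simp only [Matrix.mulVec, dotProduct, Fin.sum_univ_two, Pi.smul_apply,
      smul_eq_mul] at h ⊢
    linear_combination (↑g : Matrix (Fin 2) (Fin 2) k) a 1 * h

lemma prop1 (g : Matrix.SpecialLinearGroup (Fin 2) k) (x : Fin 2 → k) :
    (∃ c : k, x = c • (fun a => (↑g : Matrix (Fin 2) (Fin 2) k) a 1)) ↔
      Matrix.mulVec (↑(g⁻¹) : Matrix (Fin 2) (Fin 2) k) x 0 = 0 := by
  constructor
  · rintro ⟨c, rfl⟩
    have h01 := congrFun (congrFun (coe_inv_mul g) 0) 1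
    simp only [Matrix.mul_apply, Fin.sum_univ_two,
      Matrix.one_apply_ne (by decide : (0 : Fin 2) ≠ 1)] at h01
    simp only [Matrix.mulVec, dotProduct, Fin.sum_univ_two, Pi.smul_apply, smul_eq_mul]
    linear_combination c * h01
  · intro h
    refine ⟨Matrix.mulVec (↑(g⁻¹) : Matrix (Fin 2) (Fin 2) k) x 1, funext fun a => ?_⟩
    have hx : Matrix.mulVec (↑g : Matrix (Fin 2) (Fin 2) k)
        (Matrix.mulVec (↑(g⁻¹) : Matrix (Fin 2) (Fin 2) k) x) = x := by
      rw [Matrix.mulVec_mulVec, coe_mul_inv, Matrix.one_mulVec]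
    conv_lhs => rw [← hx]
    simp only [Matrix.mulVec, dotProduct, Fin.sum_univ_two, Pi.smul_apply,
      smul_eq_mul] at h ⊢
    linear_combination (↑g : Matrix (Fin 2) (Fin 2) k) a 0 * h

lemma col_ne (g : Matrix.SpecialLinearGroup (Fin 2) k) (j : Fin 2) :
    (fun a => (↑g : Matrix (Fin 2) (Fin 2) k) a j) ≠ 0 := by
  intro h
  have hdet : Matrix.det (↑g : Matrix (Fin 2) (Fin 2) k) = 1 := g.2
  rw [Matrix.det_fin_two] at hdet
  have h0 := congrFun h 0
  have h1 := congrFun h 1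
  simp only [Pi.zero_apply] at h0 h1
  have hj : j = 0 ∨ j = 1 := by omega
  rcases hj with rfl | rfl <;> rw [h0, h1] at hdet <;> simp at hdet

lemma exists_col0 (w : Fin 2 → k) (hw : w ≠ 0) :
    ∃ g : Matrix.SpecialLinearGroup (Fin 2) k,
      (fun a => (↑g : Matrix (Fin 2) (Fin 2) k) a 0) = w := by
  have : w 0 ≠ 0 ∨ w 1 ≠ 0 := by
    by_contra h
    push_neg at h
    exact hw (funext fun a => by fin_cases a <;> simp [h.1, h.2])
  rcases this with h | h
  · refine ⟨⟨!![w 0, 0; w 1, (w 0)⁻¹], ?_⟩, ?_⟩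
    · rw [Matrix.det_fin_two_of]
      field_simp
      ring
    · funext a; fin_cases a <;> simp
  · refine ⟨⟨!![w 0, -(w 1)⁻¹; w 1, 0], ?_⟩, ?_⟩
    · rw [Matrix.det_fin_two_of]
      field_simp
      ring
    · funext a; fin_cases a <;> simp

/-- For `k` algebraically closed and `x = (x₁, …, x_l) ∈ (ℙ¹)^l` with
homogeneous coordinates `v i ≠ 0`: `x` is semistable iff no point of `ℙ¹` occurs among
the `xᵢ` more than `l/2` times, and stable iff no point occurs `l/2` or more times. -/
theorem stmt13 [IsAlgClosed k] (v : Fin l → (Fin 2 → k)) (hv : ∀ i, v i ≠ 0) :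
    (GITSemistable v ↔
      ∀ w : Fin 2 → k, w ≠ 0 →
        2 * {i : Fin l | ∃ c : k, v i = c • w}.ncard ≤ l) ∧
    (GITStable v ↔
      ∀ w : Fin 2 → k, w ≠ 0 →
        2 * {i : Fin l | ∃ c : k, v i = c • w}.ncard < l) := by
  constructor
  · constructor
    · intro h w hw
      obtain ⟨g, hg⟩ := exists_col0 w hw
      obtain ⟨⟨ε, hε, hwt⟩, -⟩ := h g
      have hset : {i : Fin l | ∃ c : k, v i = c • w} =
          {i | Matrix.mulVec (↑(g⁻¹) : Matrix (Fin 2) (Fin 2) k) (v i) 1 = 0} := by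
        ext i
        rw [← hg]
        exact prop0 g (v i)
      have hlow : 2 * (({i | Matrix.mulVec (↑(g⁻¹) : Matrix (Fin 2) (Fin 2) k) (v i) 1
          = 0}.ncard : ℤ)) - l ≤ wt ε := wt_lower _ ε hε
      rw [hset]
      omega
    · intro h g
      have hu : ∀ i, Matrix.mulVec (↑(g⁻¹) : Matrix (Fin 2) (Fin 2) k) (v i) ≠ 0 :=
        fun i => mulVec_inv_ne g (v i) (hv i)
      constructor
      · obtain ⟨ε, hε, hwt⟩ := exists_min _ hu
        refine ⟨ε, hε, ?_⟩
        have hwt' : wt ε = 2 * (({i | Matrix.mulVec (↑(g⁻¹) : Matrix (Fin 2) (Fin 2) k) (v i) 1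
            = 0}.ncard : ℤ)) - l := hwt
        have hb := h (fun a => (↑g : Matrix (Fin 2) (Fin 2) k) a 0) (col_ne g 0)
        have hset : {i : Fin l | ∃ c : k, v i = c • (fun a => (↑g : Matrix (Fin 2) (Fin 2) k) a 0)}
            = {i | Matrix.mulVec (↑(g⁻¹) : Matrix (Fin 2) (Fin 2) k) (v i) 1 = 0} := by
          ext i
          exact prop0 g (v i)
        rw [hset] at hb
        omega
      · obtain ⟨ε, hε, hwt⟩ := exists_max _ hu
        refine ⟨ε, hε, ?_⟩
        have hwt' : wt ε = (l : ℤ) - 2 * (({i | Matrix.mulVec (↑(g⁻¹) :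
            Matrix (Fin 2) (Fin 2) k) (v i) 0 = 0}.ncard : ℤ)) := hwt
        have hb := h (fun a => (↑g : Matrix (Fin 2) (Fin 2) k) a 1) (col_ne g 1)
        have hset : {i : Fin l | ∃ c : k, v i = c • (fun a => (↑g : Matrix (Fin 2) (Fin 2) k) a 1)}
            = {i | Matrix.mulVec (↑(g⁻¹) : Matrix (Fin 2) (Fin 2) k) (v i) 0 = 0} := by
          ext i
          exact prop1 g (v i)
        rw [hset] at hb
        omega
  · constructor
    · intro h w hw
      obtain ⟨g, hg⟩ := exists_col0 w hw
      obtain ⟨⟨ε, hε, hwt⟩, -⟩ := h g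
      have hset : {i : Fin l | ∃ c : k, v i = c • w} =
          {i | Matrix.mulVec (↑(g⁻¹) : Matrix (Fin 2) (Fin 2) k) (v i) 1 = 0} := by
        ext i
        rw [← hg]
        exact prop0 g (v i)
      have hlow : 2 * (({i | Matrix.mulVec (↑(g⁻¹) : Matrix (Fin 2) (Fin 2) k) (v i) 1
          = 0}.ncard : ℤ)) - l ≤ wt ε := wt_lower _ ε hε
      rw [hset]
      omega
    · intro h g
      have hu : ∀ i, Matrix.mulVec (↑(g⁻¹) : Matrix (Fin 2) (Fin 2) k) (v i) ≠ 0 :=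
        fun i => mulVec_inv_ne g (v i) (hv i)
      constructor
      · obtain ⟨ε, hε, hwt⟩ := exists_min _ hu
        refine ⟨ε, hε, ?_⟩
        have hwt' : wt ε = 2 * (({i | Matrix.mulVec (↑(g⁻¹) : Matrix (Fin 2) (Fin 2) k) (v i) 1
            = 0}.ncard : ℤ)) - l := hwt
        have hb := h (fun a => (↑g : Matrix (Fin 2) (Fin 2) k) a 0) (col_ne g 0)
        have hset : {i : Fin l | ∃ c : k, v i = c • (fun a => (↑g : Matrix (Fin 2) (Fin 2) k) a 0)}
            = {i | Matrix.mulVec (↑(g⁻¹) : Matrix (Fin 2) (Fin 2) k) (v i) 1 = 0} := by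
          ext i
          exact prop0 g (v i)
        rw [hset] at hb
        omega
      · obtain ⟨ε, hε, hwt⟩ := exists_max _ hu
        refine ⟨ε, hε, ?_⟩
        have hwt' : wt ε = (l : ℤ) - 2 * (({i | Matrix.mulVec (↑(g⁻¹) :
            Matrix (Fin 2) (Fin 2) k) (v i) 0 = 0}.ncard : ℤ)) := hwt
        have hb := h (fun a => (↑g : Matrix (Fin 2) (Fin 2) k) a 1) (col_ne g 1)
        have hset : {i : Fin l | ∃ c : k, v i = c • (fun a => (↑g : Matrix (Fin 2) (Fin 2) k) a 1)}
            = {i | Matrix.mulVec (↑(g⁻¹) : Matrix (Fin 2) (Fin 2) k) (v i) 0 = 0} := by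
          ext i
          exact prop1 g (v i)
        rw [hset] at hb
        omega
  end
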